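/- If Φ : 2^ω → 2^ω is a total (truth-table) Turing functional and X is Martin-Löf random with respect to the Lebesgue measure λ, then Φ(X) is Martin-Löf random with respect to the induced measure λ_Φ, where λ_Φ(A) = λ(Φ^{-1}(A)). -/

import Mathlib

open MeasureTheory Filter

/-- Cantor space `2^ω`. -/
abbrev Cantor : Type := ℕ → Bool

/-- The first `n` bits of a sequence, as a finite binary string. -/
def pref (X : Cantor) (n : ℕ) : List Bool := List.ofFn fun i : Fin n => X i

/-- The basic open (cylinder) set determined by a finite string `σ`. -/
def cyl (σ : List Bool) : Set Cantor := {X | pref X σ.length = σ}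

/-- Partial recursiveness relative to an oracle `O : ℕ → ℕ`
(the clauses of `Nat.Partrec` plus an oracle clause). -/
inductive RecIn (O : ℕ → ℕ) : (ℕ →. ℕ) → Prop
  | zero : RecIn O (pure 0)
  | succ : RecIn O Nat.succ
  | left : RecIn O ↑fun n : ℕ => n.unpair.1
  | right : RecIn O ↑fun n : ℕ => n.unpair.2
  | oracle : RecIn O ↑O
  | pair {f g} : RecIn O f → RecIn O g → RecIn O fun n => Nat.pair <$> f n <*> g n
  | comp {f g} : RecIn O f → RecIn O g → RecIn O fun n => g n >>= f
  | prec {f g} : RecIn O f → RecIn O g → RecIn O (Nat.unpaired fun a n =>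
      n.rec (f a) fun y IH => do let i ← IH; g (Nat.pair a (Nat.pair y i)))
  | rfind {f} : RecIn O f →
      RecIn O fun a => Nat.rfind fun n => (fun m => m = 0) <$> f (Nat.pair a n)

/-- `f` is computable relative to the oracle `A ∈ 2^ω`. -/
def CantorComputableIn (A : Cantor) {α β : Type} [Primcodable α] [Primcodable β]
    (f : α → β) : Prop :=
  RecIn (fun n => (A n).toNat) fun n =>
    Part.bind (Part.ofOption (Encodable.decode (α := α) n)) fun a =>
      Part.some (Encodable.encode (f a))

/-- `X ∈ 2^ω` is a computable sequence. -/
def ComputableSeq (X : Cantor) : Prop := Computable X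

/-- A computable real: one with a computable sequence of rational approximations. -/
def ComputableReal (r : ℝ) : Prop :=
  ∃ q : ℕ → ℚ, Computable q ∧ ∀ n, |r - (q n : ℝ)| ≤ (2 : ℝ)⁻¹ ^ n

/-- A computable probability measure on Cantor space: the measures of cylinders are
uniformly computable reals. -/
def ComputableMeasure (μ : Measure Cantor) : Prop :=
  IsProbabilityMeasure μ ∧
    ∃ q : List Bool → ℕ → ℚ, Computable₂ q ∧
      ∀ σ n, |(μ (cyl σ)).toReal - (q σ n : ℝ)| ≤ (2 : ℝ)⁻¹ ^ n

/-- A uniformly effectively open sequence of classes: each `U i` is the union of a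
computable enumeration of cylinders. -/
def EffOpen (U : ℕ → Set Cantor) : Prop :=
  ∃ f : ℕ → ℕ → Option (List Bool), Computable₂ f ∧
    ∀ i, U i = ⋃ n : ℕ, Option.elim (f i n) ∅ cyl

/-- A uniformly `A`-effectively open sequence of classes. -/
def EffOpenIn (A : Cantor) (U : ℕ → Set Cantor) : Prop :=
  ∃ f : ℕ → ℕ → Option (List Bool), CantorComputableIn A (fun p : ℕ × ℕ => f p.1 p.2) ∧
    ∀ i, U i = ⋃ n : ℕ, Option.elim (f i n) ∅ cyl

/-- A `μ`-Martin-Löf test. -/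
def MLTest (μ : Measure Cantor) (U : ℕ → Set Cantor) : Prop :=
  EffOpen U ∧ ∀ i, μ (U i) ≤ (2 : ENNReal)⁻¹ ^ i

/-- `X` is `μ`-Martin-Löf random. -/
def MLRandom (μ : Measure Cantor) (X : Cantor) : Prop :=
  ∀ U : ℕ → Set Cantor, MLTest μ U → X ∉ ⋂ i, U i

/-- A `μ`-Martin-Löf test relative to the oracle `A`. -/
def MLTestIn (A : Cantor) (μ : Measure Cantor) (U : ℕ → Set Cantor) : Prop :=
  EffOpenIn A U ∧ ∀ i, μ (U i) ≤ (2 : ENNReal)⁻¹ ^ i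

/-- `X` is `μ`-Martin-Löf random relative to the oracle `A`. -/
def MLRandomIn (A : Cantor) (μ : Measure Cantor) (X : Cantor) : Prop :=
  ∀ U : ℕ → Set Cantor, MLTestIn A μ U → X ∉ ⋂ i, U i

/-- A `μ`-Schnorr test: a Martin-Löf test whose levels have measure exactly `2⁻ⁱ`. -/
def SchnorrTest (μ : Measure Cantor) (U : ℕ → Set Cantor) : Prop :=
  EffOpen U ∧ ∀ i, μ (U i) = (2 : ENNReal)⁻¹ ^ i

/-- `X` is `μ`-Schnorr random. -/
def SchnorrRandom (μ : Measure Cantor) (X : Cantor) : Prop :=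
  ∀ U : ℕ → Set Cantor, SchnorrTest μ U → X ∉ ⋂ i, U i

/-- The set of atoms of `μ`. -/
def Atoms (μ : Measure Cantor) : Set Cantor := {X | 0 < μ {X}}

/-- `lam` is the uniform (Lebesgue) measure on Cantor space. -/
def IsLebesgue (lam : Measure Cantor) : Prop :=
  ∀ σ : List Bool, lam (cyl σ) = (2 : ENNReal)⁻¹ ^ σ.length

/-- A total (truth-table) functional: every output bit is a computable function of a
computably bounded finite initial segment of the input. -/
def TTFunctional (Φ : Cantor → Cantor) : Prop :=
  ∃ (u : ℕ → ℕ) (g : List Bool → ℕ → Bool), Computable u ∧ Computable₂ g ∧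
    ∀ X n, Φ X n = g (pref X (u n)) n

/-- `B` is a Δ⁰₂ sequence: it has a uniformly computable approximation converging
pointwise to it. -/
def Delta02 (B : Cantor) : Prop :=
  ∃ Bs : ℕ → Cantor, Computable₂ (fun s n => Bs s n) ∧
    ∀ n, ∃ N, ∀ s, N ≤ s → Bs s n = B n

/-- `theta As X n` is the least stage `s` with `X↾n = As s↾n`, and `⊤ = +∞` if there
is no such stage. -/
noncomputable def theta (As : ℕ → Cantor) (X : Cantor) (n : ℕ) : ℕ∞ :=
  sInf {e : ℕ∞ | ∃ s : ℕ, e = (s : ℕ∞) ∧ pref X n = pref (As s) n}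

open Classical in
/-- The tally functional determined by the approximation `As`: the output is
`1^{θ(X,0)} 0 1^{θ(X,1)} 0 ⋯`, continuing with `1^ω` as soon as some `θ(X,n) = +∞`
(position `k` is a `0` exactly when `k = θ(X,0) + ⋯ + θ(X,m) + m` for some `m`). -/
noncomputable def tally (As : ℕ → Cantor) (X : Cantor) : Cantor := fun k =>
  if ∃ m : ℕ, (k : ℕ∞) = (∑ i ∈ Finset.range (m + 1), theta As X i) + (m : ℕ∞)
    then false else true

/-- The join `A ⊕ B` of two sequences. -/
def join (A B : Cantor) : Cantor := fun k => if k % 2 = 0 then A (k / 2) else B (k / 2)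

/-! The use of a truth-table functional is a computable function `u`, so whether `Φ X` lies in a
cylinder `[σ]` is decided by `X ↾ max_{j < |σ|} u j`. Hence `Φ⁻¹[σ]` is the union of the cylinders
`[τ]` that force `Φ` into `[σ]`, and forcing is a computable relation between `τ` and `σ`. Pulling back
a `μ.map Φ`-Martin-Löf test along `Φ` therefore gives an effectively open `μ`-test with the same
measure bounds, which `X` avoids exactly when `Φ X` avoids the original test. -/

theorem pref_length (X : Cantor) (n : ℕ) : (pref X n).length = n := by simp [pref]

theorem pref_take (X : Cantor) {a b : ℕ} (h : a ≤ b) : (pref X b).take a = pref X a := by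
  refine List.ext_getElem (by simp [pref_length, h]) fun j _ _ => ?_
  simp [pref]

theorem mem_cyl_pref (X : Cantor) (n : ℕ) : X ∈ cyl (pref X n) := by
  simp [cyl, pref_length]

theorem mem_cyl_iff {σ : List Bool} {X : Cantor} :
    X ∈ cyl σ ↔ ∀ j < σ.length, X j = σ.getD j false := by
  simp only [cyl, Set.mem_ofPred_eq, List.ext_getElem_iff, pref_length, true_and]
  constructor
  · intro h j hj
    simpa [pref, hj] using h j (by simpa [pref_length]) hj
  · intro h j _ hj
    simpa [pref, hj] using h j hj

theorem mem_iUnion_elim_cyl {e : ℕ → Option (List Bool)} {X : Cantor} :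
    X ∈ ⋃ n, Option.elim (e n) ∅ cyl ↔ ∃ n σ, e n = some σ ∧ X ∈ cyl σ := by
  simp only [Set.mem_iUnion]
  refine exists_congr fun n => ?_
  cases e n <;> simp

theorem TTFunctional.measurable {Φ : Cantor → Cantor} (hΦ : TTFunctional Φ) : Measurable Φ := by
  obtain ⟨u, g, -, -, hug⟩ := hΦ
  refine measurable_pi_lambda _ fun n => ?_
  have hfactor : (fun X : Cantor => Φ X n) =
      (fun v : Fin (u n) → Bool => g (List.ofFn v) n) ∘ fun X i => X i := by
    funext X; exact hug X n
  rw [hfactor]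
  exact (measurable_of_countable _).comp (measurable_pi_lambda _ fun i => measurable_pi_apply _)

open Computable in
theorem Computable.decide_forall_lt {α : Type*} [Primcodable α] {p : α → ℕ → Bool}
    {n : α → ℕ} (hp : Computable₂ p) (hn : Computable n) :
    Computable fun a => decide (∀ j < n a, p a j = true) := by
  refine (nat_rec hn (const true) (Primrec.and.to_comp.comp (snd.comp snd)
    (hp.comp fst (fst.comp snd))).to₂).of_eq fun a => ?_
  induction n a with
  | zero => simp
  | succ k ih =>
    simp only [ih, Nat.lt_succ_iff_lt_or_eq, or_imp, forall_and, forall_eq, Bool.decide_and,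
      Bool.decide_eq_true]

def Forces (u : ℕ → ℕ) (g : List Bool → ℕ → Bool) (τ σ : List Bool) : Prop :=
  ∀ j < σ.length, u j ≤ τ.length ∧ g (τ.take (u j)) j = σ.getD j false

section Forces

variable {u : ℕ → ℕ} {g : List Bool → ℕ → Bool}

instance (τ σ : List Bool) : Decidable (Forces u g τ σ) := by
  unfold Forces; infer_instance

open Encodable in
def pullbackEnum (u : ℕ → ℕ) (g : List Bool → ℕ → Bool) (e : ℕ → Option (List Bool))
    (m : ℕ) : Option (List Bool) :=
  (e m.unpair.1).bind fun σ => (decode m.unpair.2 : Option (List Bool)).bind fun τ =>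
    if Forces u g τ σ then some τ else none

open Computable in
theorem computable_decide_forces (hu : Computable u) (hg : Computable₂ g) :
    Computable₂ fun τ σ => decide (Forces u g τ σ) := by
  refine (Computable.decide_forall_lt (p := fun (a : List Bool × List Bool) j =>
      decide (u j ≤ a.1.length) && decide (g (a.1.take (u j)) j = a.2.getD j false)) ?_
    (list_length.comp snd)).to₂.of_eq fun a => by simp [Forces]
  exact Primrec.and.to_comp.comp
    (Primrec.nat_le.decide.to_comp.comp (hu.comp snd) (list_length.comp (fst.comp fst)))
    (Primrec.eq.decide.to_comp.comp
      (hg.comp (Primrec.list_take.to_comp.comp (hu.comp snd) (fst.comp fst)) snd)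
      ((Primrec.list_getD false).to_comp.comp (snd.comp fst) snd))

open Computable in
theorem computable_pullbackEnum {f : ℕ → ℕ → Option (List Bool)} (hu : Computable u)
    (hg : Computable₂ g) (hf : Computable₂ f) :
    Computable₂ fun i m => pullbackEnum u g (f i) m :=
  (option_bind (hf.comp fst (fst.comp (unpair.comp snd)))
    (option_bind (Computable.decode.comp (snd.comp (unpair.comp (snd.comp fst))))
      (cond ((computable_decide_forces hu hg).comp snd (snd.comp fst))
        (option_some.comp snd) (const none)).to₂).to₂).to₂.of_eq fun _ => by
    simp [pullbackEnum, Bool.cond_decide]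

theorem pullbackEnum_eq_some {e : ℕ → Option (List Bool)} {m : ℕ} {τ : List Bool} :
    pullbackEnum u g e m = some τ ↔
      ∃ σ, e m.unpair.1 = some σ ∧ Encodable.decode m.unpair.2 = some τ ∧ Forces u g τ σ := by
  simp [pullbackEnum, Option.bind_eq_some_iff]

variable {Φ : Cantor → Cantor}

theorem Forces.apply_mem_cyl (hΦ : ∀ X n, Φ X n = g (pref X (u n)) n) {τ σ : List Bool}
    {X : Cantor} (h : Forces u g τ σ) (hX : X ∈ cyl τ) : Φ X ∈ cyl σ := by
  refine mem_cyl_iff.2 fun j hj => ?_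
  obtain ⟨hle, hbit⟩ := h j hj
  have hX : pref X τ.length = τ := hX
  rw [hΦ, ← pref_take X hle, hX, hbit]

theorem apply_mem_cyl_iff (hΦ : ∀ X n, Φ X n = g (pref X (u n)) n) {σ : List Bool}
    {X : Cantor} : Φ X ∈ cyl σ ↔ ∃ τ, X ∈ cyl τ ∧ Forces u g τ σ := by
  refine ⟨fun h => ?_, fun ⟨τ, hX, hτ⟩ => hτ.apply_mem_cyl hΦ hX⟩
  have hu : ∀ j < σ.length, u j ≤ ∑ k ∈ Finset.range σ.length, u k := fun j hj =>
    Finset.single_le_sum (fun _ _ => Nat.zero_le _) (Finset.mem_range.2 hj)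
  refine ⟨pref X _, mem_cyl_pref _ _, fun j hj => ⟨by rw [pref_length]; exact hu j hj, ?_⟩⟩
  rw [pref_take X (hu j hj), ← hΦ, mem_cyl_iff.1 h j hj]

theorem preimage_iUnion_elim_cyl (hΦ : ∀ X n, Φ X n = g (pref X (u n)) n)
    (e : ℕ → Option (List Bool)) :
    Φ ⁻¹' ⋃ n, Option.elim (e n) ∅ cyl = ⋃ m, Option.elim (pullbackEnum u g e m) ∅ cyl := by
  ext X
  simp only [Set.mem_preimage, mem_iUnion_elim_cyl, pullbackEnum_eq_some, apply_mem_cyl_iff hΦ]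
  constructor
  · rintro ⟨n, σ, hσ, τ, hX, hτ⟩
    exact ⟨Nat.pair n (Encodable.encode τ), τ, ⟨σ, by simpa using hσ, by simp, hτ⟩, hX⟩
  · rintro ⟨m, τ, ⟨σ, hσ, -, hτ⟩, hX⟩
    exact ⟨m.unpair.1, σ, hσ, τ, hX, hτ⟩

end Forces

theorem EffOpen.preimage {U : ℕ → Set Cantor} {Φ : Cantor → Cantor} (hU : EffOpen U)
    (hΦ : TTFunctional Φ) : EffOpen fun i => Φ ⁻¹' U i := by
  obtain ⟨f, hf, hfU⟩ := hU
  obtain ⟨u, g, hu, hg, hug⟩ := hΦ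
  exact ⟨_, computable_pullbackEnum hu hg hf, fun i =>
    (congrArg _ (hfU i)).trans (preimage_iUnion_elim_cyl hug (f i))⟩

theorem MLTest.preimage {μ : Measure Cantor} {U : ℕ → Set Cantor} {Φ : Cantor → Cantor}
    (hU : MLTest (μ.map Φ) U) (hΦ : TTFunctional Φ) : MLTest μ fun i => Φ ⁻¹' U i :=
  ⟨hU.1.preimage hΦ, fun i =>
    (Measure.le_map_apply hΦ.measurable.aemeasurable (U i)).trans (hU.2 i)⟩

theorem stmt6_general (lam : Measure Cantor)
    (Φ : Cantor → Cantor) (hΦ : TTFunctional Φ) (X : Cantor)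
    (hX : MLRandom lam X) : MLRandom (Measure.map Φ lam) (Φ X) := by
  intro U hU hΦX
  exact hX _ (hU.preimage hΦ) (Set.mem_iInter.2 fun i => Set.mem_iInter.1 hΦX i)

/-- Preservation of Martin-Löf randomness under total (truth-table) functionals. -/
theorem stmt6 (lam : Measure Cantor) (hlam : IsLebesgue lam)
    (Φ : Cantor → Cantor) (hΦ : TTFunctional Φ) (X : Cantor)
    (hX : MLRandom lam X) : MLRandom (Measure.map Φ lam) (Φ X) :=
  stmt6_general lam Φ hΦ X hX
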